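/- Let G = (V, E) be a finite connected simple graph with the shortest-path metric δ, and let D ⊆ V with 2 ≤ |D| and D ≠ V. Then D is an efficient dominating set of G if and only if the set P = D satisfies r_P = 3/2 and R_P = 1 (i.e., the minimum pairwise graph distance in D equals 3 and every vertex of V is at graph distance at most 1 from D, with some vertex at distance exactly 1). -/

import Mathlib

/-!
In a connected graph two vertices at distance at most 2 lie in a common closed neighbourhood
(take a midpoint of a geodesic), so `D` is efficient dominating exactly when its points are
pairwise at distance at least 3 and every vertex is within distance 1 of `D`. For such a `D`
the distance 3 is attained: walk two steps from `p ∈ D` towards another point of `D`; the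
vertex reached is dominated by some `r ∈ D` with `r ≠ p` and `dist p r ≤ 3`. The maximum
gap is exactly 1 because `D` misses some vertex.
-/

/-- Minimum gap of a vertex set `P` with respect to the shortest-path metric of `G`:
half the least pairwise graph distance. -/
noncomputable def graphMinGap {V : Type*} (G : SimpleGraph V) (P : Set V) : ℝ :=
  sInf {d : ℝ | ∃ p ∈ P, ∃ q ∈ P, p ≠ q ∧ d = (G.dist p q : ℝ)} / 2

/-- Maximum gap of a vertex set `P` with respect to the shortest-path metric of `G`:
the largest graph distance from a vertex to the set `P`. -/
noncomputable def graphMaxGap {V : Type*} (G : SimpleGraph V) (P : Set V) : ℝ :=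
  sSup (Set.range fun v : V => sInf {d : ℝ | ∃ p ∈ P, d = (G.dist v p : ℝ)})

/-- Gap ratio of a vertex set `P` in the shortest-path metric of `G`. -/
noncomputable def graphGapRatio {V : Type*} (G : SimpleGraph V) (P : Set V) : ℝ :=
  graphMaxGap G P / graphMinGap G P

/-- `D` is an efficient dominating set of `G`: every closed neighbourhood meets `D`
in exactly one vertex. -/
def IsEfficientDominating {V : Type*} (G : SimpleGraph V) (D : Set V) : Prop :=
  ∀ v : V, ∃! u, u ∈ D ∧ (u = v ∨ G.Adj v u)

section FiniteExtrema

variable {ι α : Type*} [ConditionallyCompleteLinearOrder α]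

lemma Set.Finite.csInf_eq_iff_isLeast {s : Set α} (hs : s.Finite) (hne : s.Nonempty) {a : α} :
    sInf s = a ↔ IsLeast s a :=
  ⟨fun h => h ▸ ⟨hne.csInf_mem hs, fun _ hx => csInf_le hs.bddBelow hx⟩, IsLeast.csInf_eq⟩

lemma Set.Finite.csInf_le_iff {s : Set α} (hs : s.Finite) (hne : s.Nonempty) {a : α} :
    sInf s ≤ a ↔ ∃ x ∈ s, x ≤ a := by
  simpa using (hs.lt_csInf_iff hne (a := a)).not

lemma csSup_range_eq_iff_of_finite [Finite ι] [Nonempty ι] {f : ι → α} {a : α} :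
    sSup (Set.range f) = a ↔ (∀ i, f i ≤ a) ∧ ∃ i, a ≤ f i := by
  have hbdd : BddAbove (Set.range f) := (Set.finite_range f).bddAbove
  constructor
  · rintro rfl
    obtain ⟨i, hi⟩ := exists_eq_ciSup_of_finite (f := f)
    exact ⟨fun i => le_ciSup hbdd i, i, hi.ge⟩
  · rintro ⟨hle, i, hi⟩
    exact le_antisymm (ciSup_le hle) (hi.trans (le_ciSup hbdd i))

end FiniteExtrema

namespace SimpleGraph

variable {V : Type*} {G : SimpleGraph V}

lemma Connected.dist_le_one_iff (hG : G.Connected) {u v : V} :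
    G.dist u v ≤ 1 ↔ u = v ∨ G.Adj u v := by
  rw [Nat.le_one_iff_eq_zero_or_eq_one, hG.dist_eq_zero_iff, dist_eq_one_iff_adj]

lemma exists_dist_le_dist_le_of_dist_le_add {u w : V} (a b : ℕ) (h : G.dist u w ≤ a + b) :
    ∃ m, G.dist u m ≤ a ∧ G.dist m w ≤ b := by
  by_cases hr : G.Reachable u w
  · obtain ⟨p, hp⟩ := hr.exists_walk_length_eq_dist
    refine ⟨p.getVert a, (dist_le (p.take a)).trans ?_, (dist_le (p.drop a)).trans ?_⟩
    · rw [Walk.take_length]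
      exact min_le_left _ _
    · rw [Walk.drop_length]
      omega
  · exact ⟨u, by simp, by simp [dist_eq_zero_of_not_reachable hr]⟩

end SimpleGraph

open SimpleGraph

section EfficientDomination

variable {V : Type*} {G : SimpleGraph V}

lemma isEfficientDominating_iff (hG : G.Connected) {D : Set V} :
    IsEfficientDominating G D ↔
      (∀ v, ∃ u ∈ D, G.dist v u ≤ 1) ∧ ∀ p ∈ D, ∀ q ∈ D, p ≠ q → 3 ≤ G.dist p q := by
  have hN : ∀ v u, (u = v ∨ G.Adj v u) ↔ G.dist v u ≤ 1 := fun v u => by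
    rw [hG.dist_le_one_iff, eq_comm]
  simp only [IsEfficientDominating, hN]
  constructor
  · intro hD
    refine ⟨fun v => (hD v).exists, fun p hp q hq hpq => ?_⟩
    by_contra! hclose
    obtain ⟨m, hpm, hmq⟩ := exists_dist_le_dist_le_of_dist_le_add 1 1
      (show G.dist p q ≤ 1 + 1 by omega)
    exact hpq <| (hD m).unique ⟨hp, by rwa [SimpleGraph.dist_comm]⟩ ⟨hq, hmq⟩
  · rintro ⟨hdom, hsep⟩ v
    obtain ⟨u, hu, hvu⟩ := hdom v
    refine ⟨u, ⟨hu, hvu⟩, fun u' ⟨hu', hvu'⟩ => ?_⟩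
    by_contra hne
    have := hsep u' hu' u hu hne
    have := hG.dist_triangle (u := u') (v := v) (w := u)
    rw [SimpleGraph.dist_comm] at hvu'
    omega

lemma exists_dist_eq_three_of_dominating (hG : G.Connected) {D : Set V}
    (hD : D.Nontrivial) (hdom : ∀ v, ∃ u ∈ D, G.dist v u ≤ 1)
    (hsep : ∀ p ∈ D, ∀ q ∈ D, p ≠ q → 3 ≤ G.dist p q) :
    ∃ p ∈ D, ∃ q ∈ D, p ≠ q ∧ G.dist p q = 3 := by
  obtain ⟨p, hp, q, hq, hpq⟩ := hD
  have hpq3 := hsep p hp q hq hpq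
  obtain ⟨m, hpm, hmq⟩ := exists_dist_le_dist_le_of_dist_le_add 2 (G.dist p q - 2)
    (show G.dist p q ≤ 2 + (G.dist p q - 2) by omega)
  obtain ⟨r, hr, hmr⟩ := hdom m
  have hrp : p ≠ r := by
    rintro rfl
    have := hG.dist_triangle (u := p) (v := m) (w := q)
    rw [SimpleGraph.dist_comm] at hmr
    omega
  have := hsep p hp r hr hrp
  have := hG.dist_triangle (u := p) (v := m) (w := r)
  exact ⟨p, hp, r, hr, hrp, by omega⟩

-- `graphMaxGap G P` is by definition `sSup (Set.range (graphDistToSet G P))`.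
noncomputable def graphDistToSet (G : SimpleGraph V) (P : Set V) (v : V) : ℝ :=
  sInf {d : ℝ | ∃ p ∈ P, d = (G.dist v p : ℝ)}

lemma le_graphDistToSet_iff {D : Set V} (hD : D.Nonempty) (v : V) (c : ℝ) :
    c ≤ graphDistToSet G D v ↔ ∀ p ∈ D, c ≤ G.dist v p := by
  obtain ⟨p, hp⟩ := hD
  rw [graphDistToSet, le_csInf_iff]
  · exact ⟨fun h p hp => h _ ⟨p, hp, rfl⟩, by rintro h _ ⟨p, hp, rfl⟩; exact h p hp⟩
  · exact ⟨0, by rintro _ ⟨q, -, rfl⟩; positivity⟩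
  · exact ⟨_, p, hp, rfl⟩

section Gaps

variable [Finite V] {D : Set V}

lemma graphDistToSet_le_iff (hD : D.Nonempty) (v : V) (c : ℝ) :
    graphDistToSet G D v ≤ c ↔ ∃ p ∈ D, G.dist v p ≤ c := by
  obtain ⟨p, hp⟩ := hD
  have hfin : {d : ℝ | ∃ p ∈ D, d = (G.dist v p : ℝ)}.Finite :=
    (Set.finite_range fun p => (G.dist v p : ℝ)).subset (by rintro _ ⟨p, -, rfl⟩; exact ⟨p, rfl⟩)
  rw [graphDistToSet, hfin.csInf_le_iff ⟨_, p, hp, rfl⟩]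
  simp

lemma graphMinGap_eq_iff (hD : D.Nontrivial) (c : ℕ) :
    graphMinGap G D = c / 2 ↔
      (∀ p ∈ D, ∀ q ∈ D, p ≠ q → c ≤ G.dist p q) ∧ ∃ p ∈ D, ∃ q ∈ D, p ≠ q ∧ G.dist p q = c := by
  obtain ⟨p, hp, q, hq, hpq⟩ := hD
  have hfin : {d : ℝ | ∃ p ∈ D, ∃ q ∈ D, p ≠ q ∧ d = (G.dist p q : ℝ)}.Finite :=
    (Set.finite_range fun pq : V × V => (G.dist pq.1 pq.2 : ℝ)).subset
      (by rintro _ ⟨p, -, q, -, -, rfl⟩; exact ⟨(p, q), rfl⟩)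
  rw [graphMinGap, div_left_inj' two_ne_zero,
    hfin.csInf_eq_iff_isLeast ⟨_, p, hp, q, hq, hpq, rfl⟩, IsLeast, and_comm]
  refine and_congr ⟨fun h p hp q hq hpq => ?_, ?_⟩ (by simp [eq_comm])
  · exact_mod_cast h ⟨p, hp, q, hq, hpq, rfl⟩
  · rintro h _ ⟨p, hp, q, hq, hpq, rfl⟩
    exact_mod_cast h p hp q hq hpq

lemma graphMaxGap_eq_iff (hD : D.Nonempty) (c : ℝ) :
    graphMaxGap G D = c ↔ (∀ v, ∃ u ∈ D, G.dist v u ≤ c) ∧ ∃ v, ∀ u ∈ D, c ≤ G.dist v u := by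
  have : Nonempty V := hD.to_subtype.map Subtype.val
  change sSup (Set.range (graphDistToSet G D)) = c ↔ _
  simp only [csSup_range_eq_iff_of_finite, graphDistToSet_le_iff hD, le_graphDistToSet_iff hD]

end Gaps

end EfficientDomination

/-- In a finite connected graph, a proper vertex subset `D` with at least two
vertices is an efficient dominating set iff its minimum gap (in the shortest-path
metric) is `3/2` and its maximum gap is `1`. -/
theorem stmt6 {V : Type*} [Fintype V] (G : SimpleGraph V) (hG : G.Connected)
    (D : Set V) (hcard : 2 ≤ D.ncard) (hne : D ≠ Set.univ) :
    IsEfficientDominating G D ↔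
      (graphMinGap G D = 3/2 ∧ graphMaxGap G D = 1) := by
  have hD : D.Nontrivial := Set.one_lt_ncard_iff_nontrivial.1 hcard
  obtain ⟨v₀, hv₀⟩ := (Set.ne_univ_iff_exists_notMem D).1 hne
  have hmin := graphMinGap_eq_iff (G := G) hD 3
  have hmax := graphMaxGap_eq_iff (G := G) hD.nonempty 1
  simp only [Nat.cast_ofNat, Nat.cast_le_one, Nat.one_le_cast] at hmin hmax
  rw [isEfficientDominating_iff hG, hmin, hmax]
  constructor
  · rintro ⟨hdom, hsep⟩
    exact ⟨⟨hsep, exists_dist_eq_three_of_dominating hG hD hdom hsep⟩, hdom,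
      v₀, fun u hu => hG.pos_dist_of_ne (ne_of_mem_of_not_mem hu hv₀).symm⟩
  · rintro ⟨⟨hsep, -⟩, hdom, -⟩
    exact ⟨hdom, hsep⟩
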